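/- Let G ∈ G°_xy. Then g_a(G) < g_a^+(G) if and only if ε^+(G) = 0 and θ(G) = 1. -/

import Mathlib

open scoped Classical

/-- A finite simple graph with vertex labels in `ℕ`. -/
structure SGraph where
  verts : Finset ℕ
  edges : Finset (Sym2 ℕ)
  edge_sub : ∀ e ∈ edges, ∀ v ∈ e, v ∈ verts
  loopless : ∀ e ∈ edges, ¬ e.IsDiag

namespace SGraph

/-- Adjacency. -/
def Adj (G : SGraph) (u v : ℕ) : Prop := s(u, v) ∈ G.edges

/-- Reachability by walks. -/
def Reach (G : SGraph) : ℕ → ℕ → Prop := Relation.ReflTransGen G.Adj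

/-- A graph is connected if it is nonempty and every two vertices are joined by a walk. -/
def Connected (G : SGraph) : Prop :=
  G.verts.Nonempty ∧ ∀ u ∈ G.verts, ∀ v ∈ G.verts, G.Reach u v

/-- Number of connected components. -/
noncomputable def compCount (G : SGraph) : ℕ :=
  Set.ncard {S : Set ℕ | ∃ v ∈ G.verts, S = {u | G.Reach v u}}

/-- Darts (directed edges). -/
def darts (G : SGraph) : Set (ℕ × ℕ) := {p | s(p.1, p.2) ∈ G.edges}

/-- Number of isolated vertices. -/
noncomputable def isolCount (G : SGraph) : ℕ :=
  (G.verts.filter (fun v => ∀ e ∈ G.edges, v ∉ e)).card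

end SGraph

/-- An orientable combinatorial embedding of `G`, given by a rotation system:
a permutation of the darts that fixes sources and is a single cycle on the darts
leaving each vertex (the local rotation). -/
structure Rot (G : SGraph) where
  r : ℕ × ℕ → ℕ × ℕ
  bij : Set.BijOn r G.darts G.darts
  fix : ∀ d ∈ G.darts, (r d).1 = d.1
  cyc : ∀ d ∈ G.darts, ∀ d' ∈ G.darts, d.1 = d'.1 → ∃ n : ℕ, r^[n] d = d'

/-- The face-tracing map: follow an edge, then turn by the rotation. -/
def faceMap {G : SGraph} (R : Rot G) : ℕ × ℕ → ℕ × ℕ := fun d => R.r (d.2, d.1)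

/-- The number of faces of an embedding: orbits of the face-tracing map together with
one face for each isolated vertex. -/
noncomputable def faceCount {G : SGraph} (R : Rot G) : ℕ :=
  Set.ncard {S : Set (ℕ × ℕ) | ∃ d ∈ G.darts, S = {d' | ∃ n : ℕ, (faceMap R)^[n] d = d'}}
    + G.isolCount

/-- Twice the genus of the embedding `R`, by the Euler formula `2g = 2c - n + m - f`
(summed over the `c` connected components). -/
noncomputable def eulerVal (G : SGraph) (R : Rot G) : ℤ :=
  2 * G.compCount - G.verts.card + G.edges.card - faceCount R

/-- The (orientable) genus of a graph: minimum genus of an embedding. -/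
noncomputable def SGraph.genus (G : SGraph) : ℕ :=
  sInf {k : ℕ | ∃ R : Rot G, 2 * (k : ℤ) = eulerVal G R}

/-- A minor-operation: an (ordered) edge together with a flag,
`false` = deletion, `true` = contraction (of the second vertex into the first). -/
abbrev Op := (ℕ × ℕ) × Bool

namespace SGraph

/-- Deletion of the edge `ab`. -/
def del (G : SGraph) (a b : ℕ) : SGraph where
  verts := G.verts
  edges := G.edges.erase s(a, b)
  edge_sub := fun e he => G.edge_sub e (Finset.mem_of_mem_erase he)
  loopless := fun e he => G.loopless e (Finset.mem_of_mem_erase he)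

/-- Contraction of the edge `ab`: the vertex `b` is identified with `a`
(arising multiple edges are simplified, loops are discarded). -/
def con (G : SGraph) (a b : ℕ) : SGraph where
  verts := insert a (G.verts.erase b)
  edges := (G.edges.image (Sym2.map (fun w => if w = b then a else w))).filter
      (fun e => ¬ e.IsDiag)
  edge_sub := by
    intro e he v hv
    rcases Finset.mem_image.mp (Finset.mem_filter.mp he).1 with ⟨e0, he0, rfl⟩
    rcases Sym2.mem_map.mp hv with ⟨w, hw, hwv⟩
    by_cases hwb : w = b
    · simp only [hwb, if_pos rfl] at hwv
      exact hwv ▸ Finset.mem_insert_self _ _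
    · simp only [if_neg hwb] at hwv
      exact hwv ▸ Finset.mem_insert_of_mem
        (Finset.mem_erase.mpr ⟨hwb, G.edge_sub e0 he0 w hw⟩)
  loopless := fun e he => (Finset.mem_filter.mp he).2

/-- Applying a minor-operation to a graph. -/
def apply (G : SGraph) (μ : Op) : SGraph :=
  bif μ.2 then G.con μ.1.1 μ.1.2 else G.del μ.1.1 μ.1.2

/-- The set of minor-operations available for a graph (without terminals). -/
def ops (G : SGraph) : Set Op := {μ | s(μ.1.1, μ.1.2) ∈ G.edges}

/-- `G` is minor-tight on a set `E0` of its edges if every minor-operation on an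
edge of `E0` decreases the genus of `G`. -/
def MinorTightOn (G : SGraph) (E0 : Finset (Sym2 ℕ)) : Prop :=
  ∀ μ ∈ G.ops, s(μ.1.1, μ.1.2) ∈ E0 → (G.apply μ).genus < G.genus

/-- One minor-operation step, from `G` to `H`. -/
def StepTo (G H : SGraph) : Prop := ∃ μ ∈ G.ops, H = G.apply μ

/-- `H` is a minor of `G`: it is obtained from `G` by a sequence of minor-operations. -/
def IsMinorOf (H G : SGraph) : Prop := Relation.ReflTransGen StepTo G H

/-- `H` is a proper minor of `G`. -/
def IsProperMinorOf (H G : SGraph) : Prop := Relation.TransGen StepTo G H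

/-- Subgraph relation. -/
def IsSubgraphOf (H G : SGraph) : Prop := H.verts ⊆ G.verts ∧ H.edges ⊆ G.edges

/-- Deletion of a set of vertices (with all incident edges). -/
noncomputable def delVerts (G : SGraph) (S : Finset ℕ) : SGraph where
  verts := G.verts \ S
  edges := G.edges.filter (fun e => ∀ v ∈ e, v ∉ S)
  edge_sub := by
    intro e he v hv
    rcases Finset.mem_filter.mp he with ⟨he0, hS⟩
    exact Finset.mem_sdiff.mpr ⟨G.edge_sub e he0 v hv, hS v hv⟩
  loopless := fun e he => G.loopless e (Finset.mem_filter.mp he).1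

/-- `G` is `k`-connected. -/
def KConnected (G : SGraph) (k : ℕ) : Prop :=
  k < G.verts.card ∧ ∀ S : Finset ℕ, S ⊆ G.verts → S.card < k → (G.delVerts S).Connected

end SGraph

/-- `G` is an obstruction for the orientable surface `S_k`:
`g(G) = k+1` and every proper minor of `G` has genus at most `k`. -/
def IsObstruction (G : SGraph) (k : ℕ) : Prop :=
  G.genus = k + 1 ∧ ∀ H : SGraph, H.IsProperMinorOf G → H.genus ≤ k

/-- A graph with two distinct terminals `x` and `y` (the class `G_xy`). -/
structure TGraph where
  G : SGraph
  x : ℕ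
  y : ℕ
  hx : x ∈ G.verts
  hy : y ∈ G.verts
  hxy : x ≠ y

namespace TGraph

/-- `G` has no edge `xy` (i.e. `G ∈ G°_xy`). -/
def NoXY (G : TGraph) : Prop := s(G.x, G.y) ∉ G.G.edges

/-- `G` has the edge `xy`. -/
def HasXY (G : TGraph) : Prop := s(G.x, G.y) ∈ G.G.edges

/-- `G⁺`: `G` together with the edge `xy`. -/
def plus (G : TGraph) : TGraph where
  G := { verts := G.G.verts
         edges := insert s(G.x, G.y) G.G.edges
         edge_sub := by
           intro e he v hv
           rcases Finset.mem_insert.mp he with h | h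
           · subst h
             rcases Sym2.mem_iff.mp hv with rfl | rfl
             · exact G.hx
             · exact G.hy
           · exact G.G.edge_sub e h v hv
         loopless := by
           intro e he
           rcases Finset.mem_insert.mp he with h | h
           · subst h
             simpa [Sym2.mk_isDiag_iff] using G.hxy
           · exact G.G.loopless e h }
  x := G.x
  y := G.y
  hx := G.hx
  hy := G.hy
  hxy := G.hxy

/-- The set of minor-operations available for a graph with terminals: the edge `xy`
may not be contracted, and a contraction never contracts a terminal into a
non-terminal (the contracted vertex `μ.1.2` is not a terminal). -/
def ops (G : TGraph) : Set Op :=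
  {μ | s(μ.1.1, μ.1.2) ∈ G.G.edges ∧ (μ.2 = true → μ.1.2 ≠ G.x ∧ μ.1.2 ≠ G.y)}

/-- Applying a minor-operation to a graph with terminals. -/
noncomputable def apply (G : TGraph) (μ : Op) : TGraph :=
  if h : μ.2 = true → μ.1.2 ≠ G.x ∧ μ.1.2 ≠ G.y then
    { G := G.G.apply μ
      x := G.x
      y := G.y
      hx := by
        cases hb : μ.2 with
        | false => simpa [SGraph.apply, hb, SGraph.del] using G.hx
        | true =>
            simp only [SGraph.apply, hb, cond_true, SGraph.con]
            exact Finset.mem_insert_of_mem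
              (Finset.mem_erase.mpr ⟨fun hc => (h hb).1 hc.symm, G.hx⟩)
      hy := by
        cases hb : μ.2 with
        | false => simpa [SGraph.apply, hb, SGraph.del] using G.hy
        | true =>
            simp only [SGraph.apply, hb, cond_true, SGraph.con]
            exact Finset.mem_insert_of_mem
              (Finset.mem_erase.mpr ⟨fun hc => (h hb).2 hc.symm, G.hy⟩)
      hxy := G.hxy }
  else G

/-- One minor-operation step (for graphs with terminals). -/
def StepTo (G H : TGraph) : Prop := ∃ μ ∈ G.ops, H = G.apply μ

/-- `H` is a minor of `G` in `G_xy`. -/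
def IsMinorOf (H G : TGraph) : Prop := Relation.ReflTransGen StepTo G H

end TGraph

/-- The graph parameter `g`: the genus. -/
noncomputable def gP (G : TGraph) : ℤ := G.G.genus

/-- The graph parameter `g⁺`: the genus of `G⁺`. -/
noncomputable def gpP (G : TGraph) : ℤ := G.plus.G.genus

/-- The embedding `R` of `G` is `xy`-alternating: some face contains
`(x, y, x, y)` as a cyclic subsequence. -/
def IsAlt (G : TGraph) (R : Rot G.G) : Prop :=
  ∃ d ∈ G.G.darts, d.1 = G.x ∧ ∃ i j k : ℕ,
    0 < i ∧ i < j ∧ j < k ∧ k < Function.minimalPeriod (faceMap R) d ∧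
    ((faceMap R)^[i] d).1 = G.y ∧ ((faceMap R)^[j] d).1 = G.x ∧
    ((faceMap R)^[k] d).1 = G.y

/-- `G` is `xy`-alternating: it has an `xy`-alternating minimum genus embedding. -/
def IsXYAlt (G : TGraph) : Prop :=
  ∃ R : Rot G.G, 2 * (G.G.genus : ℤ) = eulerVal G.G R ∧ IsAlt G R

/-- The parameter `ε`. -/
noncomputable def epsP (G : TGraph) : ℤ := if IsXYAlt G then 1 else 0

/-- The parameter `ε⁺`, `ε⁺(G) = ε(G⁺)`. -/
noncomputable def epspP (G : TGraph) : ℤ := epsP G.plus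

/-- The alternating genus `g_a = g - ε`. -/
noncomputable def gaP (G : TGraph) : ℤ := gP G - epsP G

/-- The parameter `g_a⁺ = g⁺ - ε⁺`. -/
noncomputable def gapP (G : TGraph) : ℤ := gpP G - epspP G

/-- The parameter `θ = g⁺ - g`. -/
noncomputable def thetaP (G : TGraph) : ℤ := gpP G - gP G

/-- The parameter `η(G₁,G₂) = θ(G₁) + θ(G₂) - ε⁺(G₁)ε⁺(G₂)`. -/
noncomputable def etaP (G1 G2 : TGraph) : ℤ :=
  thetaP G1 + thetaP G2 - epspP G1 * epspP G2

/-- `↓k(P, G)`: the set of minor-operations that decrease the parameter `P` by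
at least `k`. -/
noncomputable def decSet (P : TGraph → ℤ) (k : ℤ) (G : TGraph) : Set Op :=
  {μ | μ ∈ G.ops ∧ P (G.apply μ) ≤ P G - k}

/-- The critical class `C(P)`: graphs all of whose minor-operations decrease `P`. -/
noncomputable def crit (P : TGraph → ℤ) : Set TGraph :=
  {G | G.ops = decSet P 1 G}

/-- The critical class `C°(P)`: members of `C(P)` without the edge `xy`. -/
noncomputable def critO (P : TGraph → ℤ) : Set TGraph :=
  {G | G.NoXY ∧ G.ops = decSet P 1 G}

/-- `C_k(P)`: members `G` of `C(P)` with `P(G) = k + 1`. -/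
noncomputable def critk (P : TGraph → ℤ) (k : ℕ) : Set TGraph :=
  {G | G ∈ crit P ∧ P G = k + 1}

/-- `C°_k(P)`: members `G` of `C°(P)` with `P(G) = k + 1`. -/
noncomputable def critOk (P : TGraph → ℤ) (k : ℕ) : Set TGraph :=
  {G | G ∈ critO P ∧ P G = k + 1}

/-- Hoppers of level 0. -/
noncomputable def hopper0 : Set TGraph :=
  {G | G.NoXY ∧ G.ops = decSet gP 1 G ∪ decSet gapP 2 G ∧ G ∉ critO gP}

/-- Hoppers of level 1. -/
noncomputable def hopper1 : Set TGraph :=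
  {G | G.NoXY ∧ G.ops = decSet gapP 1 G ∪ decSet gP 2 G ∧ G ∉ critO gapP}

/-- `b = s(a,b)` is a bar of the dumbbell `G`: a cut-edge whose deletion separates
the terminals. -/
def IsDumbbellBar (G : TGraph) (a b : ℕ) : Prop :=
  s(a, b) ∈ G.G.edges ∧ ¬ (G.G.del a b).Reach G.x G.y

/-- A dumbbell: a graph in `G°_xy` with a cut-edge separating the two terminals. -/
def IsDumbbell (G : TGraph) : Prop := G.NoXY ∧ ∃ a b : ℕ, IsDumbbellBar G a b

/-- The class `D` of dumbbells `G` with a bar `b` such that `θ(G) = 0`, every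
minor-operation other than those on the bar decreases `g`, and `ε⁺(G/b) = 1`. -/
noncomputable def classD : Set TGraph :=
  {G | G.NoXY ∧ ∃ a b : ℕ, IsDumbbellBar G a b ∧ ((a, b), true) ∈ G.ops ∧
    thetaP G = 0 ∧
    (∀ μ ∈ G.ops, s(μ.1.1, μ.1.2) ≠ s(a, b) → gP (G.apply μ) ≤ gP G - 1) ∧
    epspP (G.apply ((a, b), true)) = 1}

/-- `G` is an `xy`-sum with parts `G₁` and `G₂`. -/
structure XYSum (G G1 G2 : TGraph) : Prop where
  x1 : G1.x = G.x
  y1 : G1.y = G.y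
  x2 : G2.x = G.x
  y2 : G2.y = G.y
  no1 : G1.NoXY
  no2 : G2.NoXY
  vint : G1.G.verts ∩ G2.G.verts = {G.x, G.y}
  vuni : G.G.verts = G1.G.verts ∪ G2.G.verts
  edges : G.G.edges = G1.G.edges ∪ G2.G.edges ∨
    G.G.edges = insert s(G.x, G.y) (G1.G.edges ∪ G2.G.edges)

/-!
Let `g, g⁺` be the genera of `G, G⁺` and `ε, ε⁺ ∈ {0, 1}` their alternation indicators. Two
facts about inserting the edge `xy` into an embedding of `G` decide everything:

* inserted anywhere, `xy` changes twice the genus of the embedding by `0` or `2`; hence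
  `g⁺ ≤ g + 1`;
* inserted inside an `xy`-alternating face, it splits that face into two, one of which is again
  alternating; hence `ε = 1` forces `g⁺ ≤ g`, and `ε⁺ = 1` if moreover `g⁺ = g`.

With `ε, ε⁺ ∈ {0, 1}` the equivalence is then a case check.

Both facts are read off the face-tracing permutation. Inserting `(x, y)` after the dart `a` in the
rotation at `x` and `(y, x)` after `b` in the rotation at `y` turns the face map of `G`, extended
by the 2-cycle `(x, y) ↔ (y, x)`, into its composite with the transpositions of `(y, x)` with the
reverse of `a` and of `(x, y)` with the reverse of `b`; and composing a permutation with a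
transposition adds one cycle if the two points share a cycle and removes one otherwise.
-/

/-! ### Orbits of a self-map of a finite set -/

section ForwardOrbit

open Function Set

variable {α : Type*} {f g : α → α} {S : Set α} {a b u v : α}

def forwardOrbit (f : α → α) (a : α) : Set α := {b | ∃ n : ℕ, f^[n] a = b}

def forwardOrbits (f : α → α) (S : Set α) : Set (Set α) := {O | ∃ a ∈ S, O = forwardOrbit f a}

lemma mem_forwardOrbit_self (f : α → α) (a : α) : a ∈ forwardOrbit f a := ⟨0, rfl⟩

lemma iterate_mem_forwardOrbit (f : α → α) (a : α) (n : ℕ) : f^[n] a ∈ forwardOrbit f a :=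
  ⟨n, rfl⟩

lemma apply_mem_forwardOrbit (f : α → α) (a : α) : f a ∈ forwardOrbit f a := ⟨1, rfl⟩

lemma forwardOrbit_subset (hS : MapsTo f S S) (ha : a ∈ S) : forwardOrbit f a ⊆ S := by
  rintro _ ⟨n, rfl⟩
  exact hS.iterate n ha

lemma forwardOrbit_mapsTo (f : α → α) (a : α) :
    MapsTo f (forwardOrbit f a) (forwardOrbit f a) := by
  rintro _ ⟨n, rfl⟩
  exact ⟨n + 1, iterate_succ_apply' f n a⟩

lemma forwardOrbit_subset_of_mem (hb : b ∈ forwardOrbit f a) :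
    forwardOrbit f b ⊆ forwardOrbit f a := by
  obtain ⟨n, rfl⟩ := hb
  rintro _ ⟨m, rfl⟩
  exact ⟨m + n, iterate_add_apply f m n a⟩

lemma mem_forwardOrbit_symm (ha : a ∈ periodicPts f) (hb : b ∈ forwardOrbit f a) :
    a ∈ forwardOrbit f b := by
  obtain ⟨n, rfl⟩ := hb
  have hT := minimalPeriod_pos_of_mem_periodicPts ha
  refine ⟨minimalPeriod f a * n - n, ?_⟩
  rw [← iterate_add_apply, Nat.sub_add_cancel (Nat.le_mul_of_pos_left n hT)]
  exact (isPeriodicPt_minimalPeriod f a).mul_const n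

lemma forwardOrbit_eq_of_mem (ha : a ∈ periodicPts f) (hb : b ∈ forwardOrbit f a) :
    forwardOrbit f b = forwardOrbit f a :=
  (forwardOrbit_subset_of_mem hb).antisymm
    (forwardOrbit_subset_of_mem (mem_forwardOrbit_symm ha hb))

lemma lt_minimalPeriod_of_forall_iterate_ne (ha : a ∈ periodicPts f) {n : ℕ}
    (h : ∀ s, 0 < s → s ≤ n → f^[s] a ≠ a) : n < minimalPeriod f a := by
  by_contra hle
  exact h _ (minimalPeriod_pos_of_mem_periodicPts ha) (not_lt.mp hle) iterate_minimalPeriod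

lemma apply_iterate_pred {n : ℕ} (hn : 0 < n) : f (f^[n - 1] a) = f^[n] a := by
  rw [← iterate_succ_apply' f, Nat.succ_eq_add_one, Nat.sub_add_cancel hn]

lemma apply_iterate_minimalPeriod_pred (ha : a ∈ periodicPts f) :
    f (f^[minimalPeriod f a - 1] a) = a := by
  rw [apply_iterate_pred (f := f) (minimalPeriod_pos_of_mem_periodicPts ha), iterate_minimalPeriod]

lemma iterate_eq_of_forall_lt {n : ℕ} (h : ∀ k < n, g (f^[k] a) = f (f^[k] a)) :
    g^[n] a = f^[n] a := by
  induction n with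
  | zero => rfl
  | succ n ih =>
    rw [iterate_succ_apply', iterate_succ_apply', ih fun k hk => h k (by omega), h n n.lt_succ_self]

lemma iterate_eq_of_eqOn_forwardOrbit (h : ∀ b ∈ forwardOrbit f a, g b = f b) (n : ℕ) :
    g^[n] a = f^[n] a :=
  iterate_eq_of_forall_lt fun k _ => h _ (iterate_mem_forwardOrbit f a k)

lemma forwardOrbit_congr (h : ∀ b ∈ forwardOrbit f a, g b = f b) :
    forwardOrbit g a = forwardOrbit f a := by
  ext b
  simp only [forwardOrbit, iterate_eq_of_eqOn_forwardOrbit h]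

lemma mem_periodicPts_of_bijOn (hS : S.Finite) (hf : BijOn f S S) (ha : a ∈ S) :
    a ∈ periodicPts f := by
  have : Finite S := hS
  obtain ⟨n, hn, hper⟩ := (hf.mapsTo.restrict_inj.mpr hf.injOn).mem_periodicPts ⟨a, ha⟩
  refine mk_mem_periodicPts hn ?_
  have := congrArg Subtype.val hper
  rwa [hf.mapsTo.iterate_restrict, MapsTo.val_restrict_apply] at this

lemma forwardOrbits_insert (f : α → α) (a : α) (S : Set α) :
    forwardOrbits f (insert a S) = insert (forwardOrbit f a) (forwardOrbits f S) := by
  ext O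
  simp [forwardOrbits, or_and_right, exists_or]

lemma forwardOrbits_congr (hS : MapsTo f S S) (h : ∀ s ∈ S, g s = f s) :
    forwardOrbits g S = forwardOrbits f S := by
  have key : ∀ a ∈ S, forwardOrbit g a = forwardOrbit f a := fun a ha =>
    forwardOrbit_congr fun b hb => h b (forwardOrbit_subset hS ha hb)
  ext O
  constructor <;> rintro ⟨a, ha, rfl⟩ <;> exact ⟨a, ha, by rw [key a ha]⟩

lemma forwardOrbits_finite (hS : S.Finite) (hf : MapsTo f S S) :
    (forwardOrbits f S).Finite :=
  hS.finite_subsets.subset <| by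
    rintro _ ⟨a, ha, rfl⟩
    exact forwardOrbit_subset hf ha

lemma forwardOrbits_eq_pair_union (hS : S.Finite) (hf : BijOn f S S) (hu : u ∈ S) (hv : v ∈ S) :
    forwardOrbits f S = {forwardOrbit f u, forwardOrbit f v} ∪
      {O ∈ forwardOrbits f S | u ∉ O ∧ v ∉ O} := by
  ext O
  constructor
  · rintro hO
    obtain ⟨a, ha, rfl⟩ := hO
    have hper := mem_periodicPts_of_bijOn hS hf ha
    by_cases hua : u ∈ forwardOrbit f a
    · exact Or.inl (Or.inl (forwardOrbit_eq_of_mem hper hua).symm)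
    by_cases hva : v ∈ forwardOrbit f a
    · exact Or.inl (Or.inr (forwardOrbit_eq_of_mem hper hva).symm)
    exact Or.inr ⟨⟨a, ha, rfl⟩, hua, hva⟩
  · rintro ((rfl | rfl) | ⟨hO, -⟩)
    exacts [⟨u, hu, rfl⟩, ⟨v, hv, rfl⟩, hO]

lemma ncard_forwardOrbits_eq_ncard_pair_add (hS : S.Finite) (hf : BijOn f S S) (hu : u ∈ S)
    (hv : v ∈ S) :
    (forwardOrbits f S).ncard = ({forwardOrbit f u, forwardOrbit f v} : Set (Set α)).ncard +
      {O ∈ forwardOrbits f S | u ∉ O ∧ v ∉ O}.ncard := by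
  conv_lhs => rw [forwardOrbits_eq_pair_union hS hf hu hv]
  refine ncard_union_eq ?_ (toFinite _) ((forwardOrbits_finite hS hf.mapsTo).subset fun _ h => h.1)
  rw [Set.disjoint_left]
  rintro O (rfl | rfl) ⟨-, hu', hv'⟩
  exacts [hu' (mem_forwardOrbit_self f u), hv' (mem_forwardOrbit_self f v)]

lemma untouched_forwardOrbits_subset (hf : MapsTo f S S)
    (hfg : ∀ w ∈ S, w ≠ u → w ≠ v → g w = f w) :
    {O ∈ forwardOrbits f S | u ∉ O ∧ v ∉ O} ⊆ {O ∈ forwardOrbits g S | u ∉ O ∧ v ∉ O} := by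
  rintro _ ⟨⟨a, ha, rfl⟩, hua, hva⟩
  have hga : forwardOrbit g a = forwardOrbit f a := forwardOrbit_congr fun b hb =>
    hfg b (forwardOrbit_subset hf ha hb) (by rintro rfl; exact hua hb)
      (by rintro rfl; exact hva hb)
  exact ⟨⟨a, ha, hga.symm⟩, hua, hva⟩

/-- Changing `f` at two points `u, v` only changes the orbits through `u` and `v`. -/
lemma ncard_forwardOrbits_add_ncard_pair (hS : S.Finite) (hf : BijOn f S S)
    (hg : BijOn g S S) (hu : u ∈ S) (hv : v ∈ S) (hfg : ∀ w ∈ S, w ≠ u → w ≠ v → g w = f w) :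
    (forwardOrbits f S).ncard + ({forwardOrbit g u, forwardOrbit g v} : Set (Set α)).ncard =
      (forwardOrbits g S).ncard + ({forwardOrbit f u, forwardOrbit f v} : Set (Set α)).ncard := by
  have hU : {O ∈ forwardOrbits f S | u ∉ O ∧ v ∉ O} = {O ∈ forwardOrbits g S | u ∉ O ∧ v ∉ O} :=
    (untouched_forwardOrbits_subset hf.mapsTo hfg).antisymm
      (untouched_forwardOrbits_subset hg.mapsTo fun w hw hwu hwv => (hfg w hw hwu hwv).symm)
  rw [ncard_forwardOrbits_eq_ncard_pair_add hS hf hu hv,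
    ncard_forwardOrbits_eq_ncard_pair_add hS hg hu hv, hU]
  ring

section Swap

variable [DecidableEq α]

lemma comp_swap_apply_of_ne (hu : b ≠ u) (hv : b ≠ v) : (f ∘ Equiv.swap u v) b = f b := by
  simp [Equiv.swap_apply_of_ne_of_ne hu hv]

lemma forwardOrbit_comp_swap_of_notMem (hv : v ∈ periodicPts f) (huv : v ∉ forwardOrbit f u) :
    forwardOrbit (f ∘ Equiv.swap u v) u = forwardOrbit f u ∪ forwardOrbit f v := by
  have hgu : (f ∘ Equiv.swap u v) u = f v := by simp
  have hgv : (f ∘ Equiv.swap u v) v = f u := by simp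
  have hvu : u ∉ forwardOrbit f v := fun h => huv (mem_forwardOrbit_symm hv h)
  have hvg : v ∈ forwardOrbit (f ∘ Equiv.swap u v) u := by
    obtain ⟨T, hT⟩ : ∃ T, minimalPeriod f v = T + 1 :=
      Nat.exists_eq_succ_of_ne_zero (minimalPeriod_pos_of_mem_periodicPts hv).ne'
    have hseg : (f ∘ Equiv.swap u v)^[T] (f v) = f^[T] (f v) := by
      refine iterate_eq_of_forall_lt fun k hk => comp_swap_apply_of_ne ?_ ?_
      · rw [← iterate_succ_apply]
        exact fun h => hvu (h ▸ iterate_mem_forwardOrbit f v _)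
      · rw [← iterate_succ_apply]
        exact not_isPeriodicPt_of_pos_of_lt_minimalPeriod k.succ_ne_zero (by omega)
    refine ⟨T + 1, ?_⟩
    rw [iterate_succ_apply, hgu, hseg, ← iterate_succ_apply, Nat.succ_eq_add_one, ← hT,
      iterate_minimalPeriod]
  apply subset_antisymm
  · refine forwardOrbit_subset (fun w hw => ?_) (Or.inl (mem_forwardOrbit_self f u))
    by_cases hwu : w = u
    · rw [hwu, hgu]
      exact Or.inr (apply_mem_forwardOrbit f v)
    by_cases hwv : w = v
    · rw [hwv, hgv]
      exact Or.inl (apply_mem_forwardOrbit f u)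
    rw [comp_swap_apply_of_ne hwu hwv]
    exact hw.imp (fun h => forwardOrbit_mapsTo f u h) (fun h => forwardOrbit_mapsTo f v h)
  · have hclosed : ∀ w ∈ forwardOrbit (f ∘ Equiv.swap u v) u,
        f w ∈ forwardOrbit (f ∘ Equiv.swap u v) u := by
      intro w hw
      by_cases hwu : w = u
      · rw [hwu, ← hgv]
        exact forwardOrbit_mapsTo _ u hvg
      by_cases hwv : w = v
      · rw [hwv, ← hgu]
        exact apply_mem_forwardOrbit _ u
      rw [← comp_swap_apply_of_ne (f := f) hwu hwv]
      exact forwardOrbit_mapsTo _ u hw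
    exact union_subset (forwardOrbit_subset hclosed (mem_forwardOrbit_self _ u))
      (forwardOrbit_subset hclosed hvg)

/-- Composing with a transposition of two points of one orbit splits that orbit. -/
lemma notMem_forwardOrbit_comp_swap_of_mem (hu : u ∈ periodicPts f) (huv : u ≠ v)
    (hv : v ∈ forwardOrbit f u) : u ∉ forwardOrbit (f ∘ Equiv.swap u v) v := by
  obtain ⟨n, rfl⟩ := hv
  set m := n % minimalPeriod f u
  have hmT : m < minimalPeriod f u := Nat.mod_lt _ (minimalPeriod_pos_of_mem_periodicPts hu)
  have hvm : f^[m] u = f^[n] u := iterate_mod_minimalPeriod_eq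
  have hne : ∀ k, 0 < k → k ≤ m → f^[k] u ≠ u := fun k hk hkm =>
    not_isPeriodicPt_of_pos_of_lt_minimalPeriod hk.ne' (by omega)
  have hm : 0 < m := Nat.pos_of_ne_zero fun h => huv (by rw [← hvm, h, iterate_zero_apply])
  set C := {w | ∃ k, 0 < k ∧ k ≤ m ∧ f^[k] u = w}
  have hvC : f^[n] u ∈ C := ⟨m, hm, le_rfl, hvm⟩
  suffices forwardOrbit (f ∘ Equiv.swap u (f^[n] u)) (f^[n] u) ⊆ C by
    rintro h
    obtain ⟨k, hk, hkm, hku⟩ := this h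
    exact hne k hk hkm hku
  refine forwardOrbit_subset ?_ hvC
  rintro _ ⟨k, hk, hkm, rfl⟩
  rcases hkm.lt_or_eq with hkm | rfl
  · have hkv : f^[k] u ≠ f^[n] u := fun h =>
      hkm.ne (iterate_injOn_Iio_minimalPeriod (mem_Iio.mpr (by omega)) hmT (h.trans hvm.symm))
    rw [comp_swap_apply_of_ne (hne k hk hkm.le) hkv]
    exact ⟨k + 1, by omega, hkm, iterate_succ_apply' f k u⟩
  · rw [hvm]
    simp only [comp_apply, Equiv.swap_apply_right]
    exact ⟨1, by omega, hm, rfl⟩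

lemma ncard_forwardOrbits_comp_swap_of_mem (hS : S.Finite) (hf : BijOn f S S) (hu : u ∈ S)
    (hv : v ∈ S) (huv : u ≠ v) (h : v ∈ forwardOrbit f u) :
    (forwardOrbits (f ∘ Equiv.swap u v) S).ncard = (forwardOrbits f S).ncard + 1 := by
  have hcount := ncard_forwardOrbits_add_ncard_pair hS hf (hf.comp (Equiv.bijOn_swap hu hv)) hu hv
    fun w _ => comp_swap_apply_of_ne
  have hsplit : forwardOrbit (f ∘ Equiv.swap u v) u ≠ forwardOrbit (f ∘ Equiv.swap u v) v :=
    fun he => notMem_forwardOrbit_comp_swap_of_mem (mem_periodicPts_of_bijOn hS hf hu) huv h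
      (he ▸ mem_forwardOrbit_self _ u)
  rw [forwardOrbit_eq_of_mem (mem_periodicPts_of_bijOn hS hf hu) h, pair_eq_singleton,
    ncard_singleton, ncard_pair hsplit] at hcount
  omega

lemma ncard_forwardOrbits_comp_swap_of_notMem (hS : S.Finite) (hf : BijOn f S S) (hu : u ∈ S)
    (hv : v ∈ S) (h : v ∉ forwardOrbit f u) :
    (forwardOrbits (f ∘ Equiv.swap u v) S).ncard + 1 = (forwardOrbits f S).ncard := by
  have hg := hf.comp (Equiv.bijOn_swap hu hv)
  have hcount := ncard_forwardOrbits_add_ncard_pair hS hf hg hu hv fun w _ => comp_swap_apply_of_ne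
  have hmerge : v ∈ forwardOrbit (f ∘ Equiv.swap u v) u := by
    rw [forwardOrbit_comp_swap_of_notMem (mem_periodicPts_of_bijOn hS hf hv) h]
    exact Or.inr (mem_forwardOrbit_self f v)
  have hne : forwardOrbit f u ≠ forwardOrbit f v := fun he => h (he ▸ mem_forwardOrbit_self f v)
  rw [forwardOrbit_eq_of_mem (mem_periodicPts_of_bijOn hS hg hu) hmerge, pair_eq_singleton,
    ncard_singleton, ncard_pair hne] at hcount
  omega

end Swap

end ForwardOrbit

/-! ### Graphs, rotation systems and the graph `G⁺` -/

namespace SGraph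

variable {G : SGraph} {u v w : ℕ} {d : ℕ × ℕ}

lemma ext_of {G H : SGraph} (hv : G.verts = H.verts) (he : G.edges = H.edges) : G = H := by
  cases G
  cases H
  simp only at hv he
  subst hv he
  rfl

lemma darts_finite (G : SGraph) : G.darts.Finite :=
  (G.verts.finite_toSet.prod G.verts.finite_toSet).subset fun _ hd =>
    ⟨G.edge_sub _ hd _ (Sym2.mem_mk_left _ _), G.edge_sub _ hd _ (Sym2.mem_mk_right _ _)⟩

@[simp]
lemma swap_mem_darts : d.swap ∈ G.darts ↔ d ∈ G.darts := by
  simp [darts, Sym2.eq_swap]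

lemma adj_symm (h : G.Adj u v) : G.Adj v u := by
  rwa [Adj, Sym2.eq_swap]

lemma reach_symm (h : G.Reach u v) : G.Reach v u := by
  induction h with
  | refl => exact Relation.ReflTransGen.refl
  | tail _ hadj ih => exact Relation.ReflTransGen.head (adj_symm hadj) ih

lemma reach_trans (huv : G.Reach u v) (hvw : G.Reach v w) : G.Reach u w :=
  Relation.ReflTransGen.trans huv hvw

lemma bijOn_swap_darts (G : SGraph) : Set.BijOn Prod.swap G.darts G.darts :=
  ⟨fun _ hd => swap_mem_darts.mpr hd, Prod.swap_injective.injOn,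
    fun d hd => ⟨d.swap, swap_mem_darts.mpr hd, d.swap_swap⟩⟩

def reachSet (G : SGraph) (v : ℕ) : Set ℕ := {u | G.Reach v u}

def reachSets (G : SGraph) : Set (Set ℕ) := {S | ∃ v ∈ G.verts, S = G.reachSet v}

lemma compCount_eq : G.compCount = G.reachSets.ncard := rfl

lemma reachSet_eq_iff : G.reachSet u = G.reachSet v ↔ G.Reach u v := by
  refine ⟨fun h => reach_symm (h ▸ Relation.ReflTransGen.refl : u ∈ G.reachSet v),
    fun h => Set.ext fun w => ⟨reach_trans (reach_symm h), reach_trans h⟩⟩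

lemma reachSets_finite (G : SGraph) : G.reachSets.Finite :=
  G.verts.finite_toSet.finite_subsets.subset <| by
    rintro _ ⟨v, hv, rfl⟩ u hu
    induction hu with
    | refl => exact hv
    | tail _ hadj _ => exact G.edge_sub _ hadj _ (Sym2.mem_mk_right _ _)

def IsIsolated (G : SGraph) (v : ℕ) : Prop := ∀ e ∈ G.edges, v ∉ e

lemma isIsolated_iff_forall_darts : G.IsIsolated v ↔ ∀ d ∈ G.darts, d.1 ≠ v := by
  constructor
  · rintro h d hd rfl
    exact h _ hd (Sym2.mem_mk_left _ _)
  · intro h e he hv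
    obtain ⟨w, rfl⟩ := Sym2.mem_iff_exists.mp hv
    exact h (v, w) he rfl

end SGraph

open SGraph

lemma faceMap_bijOn {G : SGraph} (R : Rot G) : Set.BijOn (faceMap R) G.darts G.darts :=
  R.bij.comp G.bijOn_swap_darts

lemma faceMap_fst {G : SGraph} (R : Rot G) {d : ℕ × ℕ} (hd : d ∈ G.darts) :
    (faceMap R d).1 = d.2 :=
  R.fix _ (swap_mem_darts.mpr hd)

lemma faceCount_eq {G : SGraph} (R : Rot G) :
    faceCount R = (forwardOrbits (faceMap R) G.darts).ncard + G.isolCount := rfl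

def Rot.SameFace {G : SGraph} (R : Rot G) (p q : ℕ × ℕ) : Prop :=
  p ∈ G.darts ∧ q ∈ forwardOrbit (faceMap R) p

lemma reach_of_mem_forwardOrbit_faceMap {G : SGraph} (R : Rot G) {d e : ℕ × ℕ}
    (hd : d ∈ G.darts) (he : e ∈ forwardOrbit (faceMap R) d) : G.Reach d.2 e.2 := by
  obtain ⟨n, rfl⟩ := he
  induction n with
  | zero => exact Relation.ReflTransGen.refl
  | succ n ih =>
    have hn := (faceMap_bijOn R).mapsTo.iterate n hd
    refine Relation.ReflTransGen.tail ih ?_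
    rw [Function.iterate_succ_apply', SGraph.Adj, ← faceMap_fst R hn]
    exact (faceMap_bijOn R).mapsTo hn

namespace TGraph

variable (T : TGraph) {u v : ℕ}

lemma plus_edges : T.plus.G.edges = insert s(T.x, T.y) T.G.edges := rfl

lemma plus_darts : T.plus.G.darts = insert (T.x, T.y) (insert (T.y, T.x) T.G.darts) := by
  ext ⟨u, v⟩
  simp only [SGraph.darts, plus_edges, Finset.mem_insert, Sym2.eq_iff, Set.mem_insert_iff,
    Prod.mk.injEq, Set.mem_ofPred_eq]
  tauto

lemma darts_subset_plus_darts : T.G.darts ⊆ T.plus.G.darts := by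
  rw [plus_darts]
  exact fun d hd => Or.inr (Or.inr hd)

lemma fst_mem_plus_darts : (T.x, T.y) ∈ T.plus.G.darts := by
  rw [plus_darts]
  exact Or.inl rfl

lemma snd_mem_plus_darts : (T.y, T.x) ∈ T.plus.G.darts := by
  rw [plus_darts]
  exact Or.inr (Or.inl rfl)

variable {T}

lemma eq_or_mem_darts_of_fst_eq_x {d : ℕ × ℕ} (hd : d ∈ T.plus.G.darts) (hdx : d.1 = T.x) :
    d = (T.x, T.y) ∨ d ∈ T.G.darts ∧ d.1 = T.x := by
  rw [plus_darts] at hd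
  rcases hd with rfl | rfl | hd
  exacts [Or.inl rfl, absurd hdx T.hxy.symm, Or.inr ⟨hd, hdx⟩]

lemma eq_or_mem_darts_of_fst_eq_y {d : ℕ × ℕ} (hd : d ∈ T.plus.G.darts) (hdy : d.1 = T.y) :
    d = (T.y, T.x) ∨ d ∈ T.G.darts ∧ d.1 = T.y := by
  rw [plus_darts] at hd
  rcases hd with rfl | rfl | hd
  exacts [absurd hdy T.hxy, Or.inl rfl, Or.inr ⟨hd, hdy⟩]

lemma NoXY.fst_notMem_darts (hT : T.NoXY) : (T.x, T.y) ∉ T.G.darts := hT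

lemma NoXY.snd_notMem_darts (hT : T.NoXY) : (T.y, T.x) ∉ T.G.darts := by
  rw [← swap_mem_darts]
  exact hT

lemma plus_adj_iff :
    T.plus.G.Adj u v ↔ T.G.Adj u v ∨ (u = T.x ∧ v = T.y) ∨ (u = T.y ∧ v = T.x) := by
  simp only [SGraph.Adj, plus_edges, Finset.mem_insert, Sym2.eq_iff]
  tauto

lemma plus_reach_iff : T.plus.G.Reach u v ↔ T.G.Reach u v ∨
    (T.G.Reach u T.x ∧ T.G.Reach T.y v) ∨ (T.G.Reach u T.y ∧ T.G.Reach T.x v) := by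
  constructor
  · intro h
    induction h with
    | refl => exact Or.inl Relation.ReflTransGen.refl
    | tail _ hadj ih =>
      rcases plus_adj_iff.mp hadj with hadj | ⟨rfl, rfl⟩ | ⟨rfl, rfl⟩ <;>
        rcases ih with h | ⟨h₁, h₂⟩ | ⟨h₁, h₂⟩
      exacts [Or.inl (h.tail hadj), Or.inr (Or.inl ⟨h₁, h₂.tail hadj⟩),
        Or.inr (Or.inr ⟨h₁, h₂.tail hadj⟩), Or.inr (Or.inl ⟨h, .refl⟩),
        Or.inr (Or.inl ⟨h₁, .refl⟩), Or.inl h₁, Or.inr (Or.inr ⟨h, .refl⟩), Or.inl h₁,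
        Or.inr (Or.inr ⟨h₁, .refl⟩)]
  · have lift : ∀ {a b}, T.G.Reach a b → T.plus.G.Reach a b := fun h =>
      Relation.ReflTransGen.mono (fun _ _ h => plus_adj_iff.mpr (Or.inl h)) _ _ h
    have hxy : T.plus.G.Reach T.x T.y := .single (plus_adj_iff.mpr (Or.inr (Or.inl ⟨rfl, rfl⟩)))
    rintro (h | ⟨h₁, h₂⟩ | ⟨h₁, h₂⟩)
    exacts [lift h, reach_trans (lift h₁) (reach_trans hxy (lift h₂)),
      reach_trans (lift h₁) (reach_trans (reach_symm hxy) (lift h₂))]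

lemma plus_reachSet_of_reach_x (hv : T.G.Reach v T.x) :
    T.plus.G.reachSet v = T.G.reachSet T.x ∪ T.G.reachSet T.y := by
  ext u
  simp only [reachSet, Set.mem_ofPred_eq, Set.mem_union, plus_reach_iff]
  constructor
  · rintro (h | ⟨-, h⟩ | ⟨-, h⟩)
    exacts [Or.inl (reach_trans (reach_symm hv) h), Or.inr h, Or.inl h]
  · rintro (h | h)
    exacts [Or.inl (reach_trans hv h), Or.inr (Or.inl ⟨hv, h⟩)]

lemma plus_reachSet_of_reach_y (hv : T.G.Reach v T.y) :
    T.plus.G.reachSet v = T.G.reachSet T.x ∪ T.G.reachSet T.y := by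
  ext u
  simp only [reachSet, Set.mem_ofPred_eq, Set.mem_union, plus_reach_iff]
  constructor
  · rintro (h | ⟨-, h⟩ | ⟨-, h⟩)
    exacts [Or.inr (reach_trans (reach_symm hv) h), Or.inr h, Or.inl h]
  · rintro (h | h)
    exacts [Or.inr (Or.inr ⟨hv, h⟩), Or.inl (reach_trans hv h)]

lemma plus_reachSet_of_not_reach (hx : ¬ T.G.Reach v T.x) (hy : ¬ T.G.Reach v T.y) :
    T.plus.G.reachSet v = T.G.reachSet v := by
  ext u
  simp only [reachSet, Set.mem_ofPred_eq, plus_reach_iff]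
  tauto

lemma plus_reachSets :
    T.plus.G.reachSets = insert (T.G.reachSet T.x ∪ T.G.reachSet T.y)
      (T.G.reachSets \ {T.G.reachSet T.x, T.G.reachSet T.y}) := by
  ext S
  constructor
  · rintro ⟨v, hv, rfl⟩
    by_cases hvx : T.G.Reach v T.x
    · exact Or.inl (plus_reachSet_of_reach_x hvx)
    by_cases hvy : T.G.Reach v T.y
    · exact Or.inl (plus_reachSet_of_reach_y hvy)
    rw [plus_reachSet_of_not_reach hvx hvy]
    refine Or.inr ⟨⟨v, hv, rfl⟩, ?_⟩
    rintro (h | (h : _ = _))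
    exacts [hvx (reachSet_eq_iff.mp h), hvy (reachSet_eq_iff.mp h)]
  · rintro (rfl | ⟨⟨v, hv, rfl⟩, hne⟩)
    · exact ⟨T.x, T.hx, (plus_reachSet_of_reach_x .refl).symm⟩
    exact ⟨v, hv, (plus_reachSet_of_not_reach (fun h => hne (Or.inl (reachSet_eq_iff.mpr h)))
      (fun h => hne (Or.inr (reachSet_eq_iff.mpr h)))).symm⟩

lemma union_reachSet_notMem_reachSets_sdiff :
    T.G.reachSet T.x ∪ T.G.reachSet T.y ∉
      T.G.reachSets \ {T.G.reachSet T.x, T.G.reachSet T.y} := by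
  rintro ⟨⟨v, -, hv⟩, hne⟩
  have hx : T.x ∈ T.G.reachSet v := hv ▸ Or.inl .refl
  exact hne (Or.inl (hv.trans (reachSet_eq_iff.mpr hx)))

lemma compCount_plus_add_ncard :
    T.plus.G.compCount + ({T.G.reachSet T.x, T.G.reachSet T.y} : Set (Set ℕ)).ncard =
      T.G.compCount + 1 := by
  have hpair : {T.G.reachSet T.x, T.G.reachSet T.y} ⊆ T.G.reachSets := by
    rintro _ (rfl | rfl)
    exacts [⟨T.x, T.hx, rfl⟩, ⟨T.y, T.hy, rfl⟩]
  have hcard := Set.ncard_sdiff_add_ncard_of_subset hpair T.G.reachSets_finite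
  rw [compCount_eq, compCount_eq, plus_reachSets, Set.ncard_insert_of_notMem
    union_reachSet_notMem_reachSets_sdiff T.G.reachSets_finite.sdiff]
  omega

lemma compCount_plus_of_reach (h : T.G.Reach T.x T.y) : T.plus.G.compCount = T.G.compCount := by
  have := compCount_plus_add_ncard (T := T)
  rw [reachSet_eq_iff.mpr h, Set.pair_eq_singleton, Set.ncard_singleton] at this
  omega

lemma compCount_plus_of_not_reach (h : ¬ T.G.Reach T.x T.y) :
    T.plus.G.compCount + 1 = T.G.compCount := by
  have := compCount_plus_add_ncard (T := T)
  rw [Set.ncard_pair fun hC => h (reachSet_eq_iff.mp hC)] at this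
  omega

lemma isIsolated_plus_iff :
    T.plus.G.IsIsolated v ↔ T.G.IsIsolated v ∧ v ≠ T.x ∧ v ≠ T.y := by
  simp only [IsIsolated, plus_edges, Finset.forall_mem_insert, Sym2.mem_iff]
  tauto

lemma isolCount_plus_add :
    T.plus.G.isolCount + ((if T.G.IsIsolated T.x then 1 else 0) +
      (if T.G.IsIsolated T.y then 1 else 0)) = T.G.isolCount := by
  set I := T.G.verts.filter fun v => ∀ e ∈ T.G.edges, v ∉ e
  have hplus : T.plus.G.verts.filter (fun v => ∀ e ∈ T.plus.G.edges, v ∉ e) = I \ {T.x, T.y} := by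
    ext v
    have := isIsolated_plus_iff (T := T) (v := v)
    simp only [IsIsolated] at this
    simp only [Finset.mem_filter, this, I, Finset.mem_sdiff, Finset.mem_insert,
      Finset.mem_singleton]
    exact ⟨fun h => ⟨⟨h.1, h.2.1⟩, by tauto⟩, fun h => ⟨h.1.1, h.1.2, by tauto⟩⟩
  have hinter : (I ∩ {T.x, T.y}).card =
      (if T.G.IsIsolated T.x then 1 else 0) + (if T.G.IsIsolated T.y then 1 else 0) := by
    have hxI : T.x ∈ I ↔ T.G.IsIsolated T.x := by simp [I, T.hx, IsIsolated]
    have hyI : T.y ∈ I ↔ T.G.IsIsolated T.y := by simp [I, T.hy, IsIsolated]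
    rw [Finset.inter_comm, ← hxI, ← hyI]
    by_cases hx : T.x ∈ I <;> by_cases hy : T.y ∈ I <;>
      simp [hx, hy, Finset.insert_inter_of_mem, Finset.insert_inter_of_notMem, T.hxy]
  unfold SGraph.isolCount
  rw [hplus, ← hinter, Finset.card_sdiff_add_card_inter]

end TGraph

/-! ### Inserting the edge `xy` into a rotation system -/

section ProdSwap

variable {α β : Type*} [DecidableEq α] [DecidableEq β] {u v w : α × β}

lemma swap_apply_fst (h : u.1 = v.1) : (Equiv.swap u v w).1 = w.1 := by
  rw [Equiv.swap_apply_def]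
  split_ifs with hu hv
  exacts [hu ▸ h.symm, hv ▸ h, rfl]

lemma swap_apply_of_fst_ne (h : u.1 = v.1) (hw : w.1 ≠ u.1) : Equiv.swap u v w = w :=
  Equiv.swap_apply_of_ne_of_ne (by rintro rfl; exact hw rfl) (by rintro rfl; exact hw h.symm)

lemma swap_comp_swap_comm_of_fst_ne {u' v' : α × β} (h : u.1 = v.1) (h' : u'.1 = v'.1)
    (hne : u.1 ≠ u'.1) :
    ⇑(Equiv.swap u v) ∘ Equiv.swap u' v' = ⇑(Equiv.swap u' v') ∘ Equiv.swap u v := by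
  funext w
  simp only [Function.comp_apply]
  by_cases hw : w.1 = u.1
  · rw [swap_apply_of_fst_ne h' (by rwa [hw]), swap_apply_of_fst_ne h'
      (by rwa [swap_apply_fst h, hw])]
  · rw [swap_apply_of_fst_ne h hw, swap_apply_of_fst_ne h (by rwa [swap_apply_fst h'])]

end ProdSwap

namespace Rot

variable {G : SGraph} (R : Rot G) {d : ℕ × ℕ}

noncomputable def extendId : ℕ × ℕ → ℕ × ℕ := fun d => if d ∈ G.darts then R.r d else d

noncomputable def extFaceMap : ℕ × ℕ → ℕ × ℕ := R.extendId ∘ Prod.swap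

lemma extendId_of_mem (hd : d ∈ G.darts) : R.extendId d = R.r d := if_pos hd

lemma extendId_of_notMem (hd : d ∉ G.darts) : R.extendId d = d := if_neg hd

lemma extFaceMap_of_mem (hd : d ∈ G.darts) : R.extFaceMap d = faceMap R d :=
  R.extendId_of_mem (swap_mem_darts.mpr hd)

lemma extendId_fst (d : ℕ × ℕ) : (R.extendId d).1 = d.1 := by
  by_cases hd : d ∈ G.darts
  · rw [R.extendId_of_mem hd, R.fix d hd]
  · rw [R.extendId_of_notMem hd]

lemma bijOn_extendId {S : Set (ℕ × ℕ)} (hS : G.darts ⊆ S) : Set.BijOn R.extendId S S := by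
  refine ⟨fun d hd => ?_, fun d _ e _ hde => ?_, fun e he => ?_⟩
  · by_cases hdD : d ∈ G.darts
    · rw [R.extendId_of_mem hdD]
      exact hS (R.bij.mapsTo hdD)
    · rwa [R.extendId_of_notMem hdD]
  · by_cases hdD : d ∈ G.darts <;> by_cases heD : e ∈ G.darts
    · rw [R.extendId_of_mem hdD, R.extendId_of_mem heD] at hde
      exact R.bij.injOn hdD heD hde
    · rw [R.extendId_of_mem hdD, R.extendId_of_notMem heD] at hde
      exact absurd (hde ▸ R.bij.mapsTo hdD) heD
    · rw [R.extendId_of_notMem hdD, R.extendId_of_mem heD] at hde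
      exact absurd (hde ▸ R.bij.mapsTo heD) hdD
    · rwa [R.extendId_of_notMem hdD, R.extendId_of_notMem heD] at hde
  · by_cases heD : e ∈ G.darts
    · obtain ⟨d, hd, rfl⟩ := R.bij.surjOn heD
      exact ⟨d, hS hd, R.extendId_of_mem hd⟩
    · exact ⟨e, he, R.extendId_of_notMem heD⟩

lemma forwardOrbit_subset_star (hd : d ∈ G.darts) :
    forwardOrbit R.r d ⊆ {e | e ∈ G.darts ∧ e.1 = d.1} :=
  forwardOrbit_subset (fun e he => ⟨R.bij.mapsTo he.1, (R.fix e he.1).trans he.2⟩) ⟨hd, rfl⟩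

lemma iterate_extendId_comp_swap_comp_swap {a z b z' : ℕ × ℕ} (ha : a.1 = z.1)
    (hb : b.1 = z'.1) (hd : d ∈ G.darts) (hda : d.1 ≠ a.1) (hdb : d.1 ≠ b.1) (n : ℕ) :
    (R.extendId ∘ Equiv.swap a z ∘ Equiv.swap b z')^[n] d = R.r^[n] d := by
  refine iterate_eq_of_eqOn_forwardOrbit (fun e he => ?_) n
  obtain ⟨heD, hed⟩ := R.forwardOrbit_subset_star hd he
  rw [Function.comp_apply, Function.comp_apply, swap_apply_of_fst_ne hb (hed ▸ hdb),
    swap_apply_of_fst_ne ha (hed ▸ hda), R.extendId_of_mem heD]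

end Rot

/-- `a` is the dart at `u` after which the new dart `(u, w)` is inserted into the rotation;
if `u` is isolated this is `(u, w)` itself. -/
def IsInsertionPoint (G : SGraph) (u w : ℕ) (a : ℕ × ℕ) : Prop :=
  a.1 = u ∧ (a ∈ G.darts ∨ a = (u, w) ∧ G.IsIsolated u)

lemma exists_isInsertionPoint (G : SGraph) (u w : ℕ) : ∃ a, IsInsertionPoint G u w a := by
  by_cases h : G.IsIsolated u
  · exact ⟨(u, w), rfl, Or.inr ⟨rfl, h⟩⟩
  · obtain ⟨d, hd, hdu⟩ : ∃ d ∈ G.darts, d.1 = u := by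
      simpa [isIsolated_iff_forall_darts] using h
    exact ⟨d, hdu, Or.inl hd⟩

namespace IsInsertionPoint

variable {G : SGraph} {u w : ℕ} {a : ℕ × ℕ}

lemma mem_darts_iff (ha : IsInsertionPoint G u w a) : a ∈ G.darts ↔ ¬ G.IsIsolated u := by
  rcases ha with ⟨hau, ha | ⟨rfl, hiso⟩⟩
  · exact ⟨fun _ hiso => isIsolated_iff_forall_darts.mp hiso a ha hau, fun _ => ha⟩
  · exact ⟨fun h => absurd rfl (isIsolated_iff_forall_darts.mp hiso _ h), fun h => absurd hiso h⟩

lemma eq_of_notMem (ha : IsInsertionPoint G u w a) (h : a ∉ G.darts) : a = (u, w) :=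
  (ha.2.resolve_left h).1

lemma eq_of_isIsolated (ha : IsInsertionPoint G u w a) (h : G.IsIsolated u) : a = (u, w) :=
  ha.eq_of_notMem (ha.mem_darts_iff.not.mpr (not_not.mpr h))

lemma swap_of_faceMap (R : Rot G) {d : ℕ × ℕ} (hd : d ∈ G.darts) (hdu : (faceMap R d).1 = u) :
    IsInsertionPoint G u w d.swap :=
  ⟨(faceMap_fst R hd).symm.trans hdu, Or.inl (swap_mem_darts.mpr hd)⟩

/-- The rotation at `u` stays cyclic when `(u, w)` is inserted after `a`. -/
lemma exists_iterate_comp_swap (R : Rot G) (ha : IsInsertionPoint G u w a)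
    {ρ : ℕ × ℕ → ℕ × ℕ} (hρ : ∀ d ∈ G.darts, d.1 = u → ρ d = R.r d) (hρz : ρ (u, w) = (u, w))
    (hz : (u, w) ∉ G.darts) (hper : a ∈ Function.periodicPts (ρ ∘ Equiv.swap a (u, w)))
    {d d' : ℕ × ℕ} (hd : d = (u, w) ∨ d ∈ G.darts ∧ d.1 = u)
    (hd' : d' = (u, w) ∨ d' ∈ G.darts ∧ d'.1 = u) :
    ∃ n, (ρ ∘ Equiv.swap a (u, w))^[n] d = d' := by
  rcases ha with ⟨hau, ha | ⟨rfl, hiso⟩⟩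
  · have horb : forwardOrbit ρ a = forwardOrbit R.r a := forwardOrbit_congr fun e he =>
      have he' := R.forwardOrbit_subset_star ha he
      hρ e he'.1 (he'.2.trans hau)
    have hza : (u, w) ∉ forwardOrbit ρ a := fun h =>
      hz (R.forwardOrbit_subset_star ha (horb ▸ h)).1
    have hmerge := forwardOrbit_comp_swap_of_notMem
      (Function.mk_mem_periodicPts one_pos hρz) hza
    have hmem : ∀ e, (e = (u, w) ∨ e ∈ G.darts ∧ e.1 = u) →
        e ∈ forwardOrbit (ρ ∘ Equiv.swap a (u, w)) a := by
      rintro e (rfl | ⟨he, heu⟩)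
      · exact hmerge ▸ Or.inr (mem_forwardOrbit_self ρ _)
      · obtain ⟨n, hn⟩ := R.cyc a ha e he (hau.trans heu.symm)
        exact hmerge ▸ Or.inl (horb ▸ ⟨n, hn⟩)
    have := hmem d' hd'
    rwa [← forwardOrbit_eq_of_mem hper (hmem d hd)] at this
  · have key : ∀ e, (e = (u, w) ∨ e ∈ G.darts ∧ e.1 = u) → e = (u, w) := by
      rintro e (rfl | ⟨he, heu⟩)
      · rfl
      · exact absurd heu (isIsolated_iff_forall_darts.mp hiso e he)
    exact ⟨0, by rw [key d hd, key d' hd']; rfl⟩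

lemma mem_plus_darts {T : TGraph} (ha : IsInsertionPoint T.G u w a)
    (huw : (u, w) ∈ T.plus.G.darts) : a ∈ T.plus.G.darts := by
  rcases ha with ⟨-, ha | ⟨rfl, -⟩⟩
  exacts [T.darts_subset_plus_darts ha, huw]

end IsInsertionPoint

namespace Rot

open TGraph

variable {T : TGraph} (R : Rot T.G) {a b : ℕ × ℕ}

lemma bijOn_addEdge (ha : IsInsertionPoint T.G T.x T.y a) (hb : IsInsertionPoint T.G T.y T.x b) :
    Set.BijOn (R.extendId ∘ Equiv.swap a (T.x, T.y) ∘ Equiv.swap b (T.y, T.x))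
      T.plus.G.darts T.plus.G.darts :=
  (R.bijOn_extendId T.darts_subset_plus_darts).comp <|
    (Equiv.bijOn_swap (ha.mem_plus_darts T.fst_mem_plus_darts) T.fst_mem_plus_darts).comp
      (Equiv.bijOn_swap (hb.mem_plus_darts T.snd_mem_plus_darts) T.snd_mem_plus_darts)

lemma cyc_addEdge (hT : T.NoXY) (ha : IsInsertionPoint T.G T.x T.y a)
    (hb : IsInsertionPoint T.G T.y T.x b) :
    ∀ d ∈ T.plus.G.darts, ∀ d' ∈ T.plus.G.darts, d.1 = d'.1 →
      ∃ n, (R.extendId ∘ Equiv.swap a (T.x, T.y) ∘ Equiv.swap b (T.y, T.x))^[n] d = d' := by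
  intro d hd d' hd' hdd'
  have hper : ∀ e ∈ T.plus.G.darts,
      e ∈ Function.periodicPts (R.extendId ∘ Equiv.swap a (T.x, T.y) ∘ Equiv.swap b (T.y, T.x)) :=
    fun e he => mem_periodicPts_of_bijOn T.plus.G.darts_finite (R.bijOn_addEdge ha hb) he
  have hbz : b.1 = (T.y, T.x).1 := hb.1
  have haz : a.1 = (T.x, T.y).1 := ha.1
  by_cases hx : d.1 = T.x
  · have hcomm : R.extendId ∘ Equiv.swap a (T.x, T.y) ∘ Equiv.swap b (T.y, T.x) =
        (R.extendId ∘ Equiv.swap b (T.y, T.x)) ∘ Equiv.swap a (T.x, T.y) := by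
      rw [swap_comp_swap_comm_of_fst_ne haz hbz (by rw [haz, hbz]; exact T.hxy)]
      rfl
    rw [hcomm] at hper ⊢
    refine ha.exists_iterate_comp_swap R (fun e he hex => ?_) ?_ hT.fst_notMem_darts
      (hper a (ha.mem_plus_darts T.fst_mem_plus_darts)) (eq_or_mem_darts_of_fst_eq_x hd hx)
      (eq_or_mem_darts_of_fst_eq_x hd' (hdd' ▸ hx))
    · rw [Function.comp_apply, swap_apply_of_fst_ne hbz (by rw [hex, hbz]; exact T.hxy),
        R.extendId_of_mem he]
    · rw [Function.comp_apply, swap_apply_of_fst_ne hbz (by rw [hbz]; exact T.hxy),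
        R.extendId_of_notMem hT.fst_notMem_darts]
  by_cases hy : d.1 = T.y
  · refine hb.exists_iterate_comp_swap R (ρ := R.extendId ∘ Equiv.swap a (T.x, T.y))
      (fun e he hey => ?_) ?_ hT.snd_notMem_darts
      (hper b (hb.mem_plus_darts T.snd_mem_plus_darts)) (eq_or_mem_darts_of_fst_eq_y hd hy)
      (eq_or_mem_darts_of_fst_eq_y hd' (hdd' ▸ hy))
    · rw [Function.comp_apply, swap_apply_of_fst_ne haz (by rw [hey, haz]; exact T.hxy.symm),
        R.extendId_of_mem he]
    · rw [Function.comp_apply, swap_apply_of_fst_ne haz (by rw [haz]; exact T.hxy.symm),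
        R.extendId_of_notMem hT.snd_notMem_darts]
  · have hstar : ∀ e ∈ T.plus.G.darts, e.1 = d.1 → e ∈ T.G.darts := by
      intro e he hed
      rw [plus_darts] at he
      rcases he with rfl | rfl | he
      exacts [absurd hed.symm hx, absurd hed.symm hy, he]
    obtain ⟨n, hn⟩ := R.cyc d (hstar d hd rfl) d' (hstar d' hd' hdd'.symm) hdd'
    exact ⟨n, (R.iterate_extendId_comp_swap_comp_swap haz hbz (hstar d hd rfl) (haz ▸ hx)
      (hbz ▸ hy) n).trans hn⟩

/-- The embedding of `G⁺` obtained from `R` by inserting the dart `(x, y)` after `a` in the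
rotation at `x` and the dart `(y, x)` after `b` in the rotation at `y`. -/
noncomputable def addEdge (hT : T.NoXY) (ha : IsInsertionPoint T.G T.x T.y a)
    (hb : IsInsertionPoint T.G T.y T.x b) : Rot T.plus.G where
  r := R.extendId ∘ Equiv.swap a (T.x, T.y) ∘ Equiv.swap b (T.y, T.x)
  bij := R.bijOn_addEdge ha hb
  fix d _ := by
    rw [Function.comp_apply, extendId_fst, Function.comp_apply,
      swap_apply_fst (v := (T.x, T.y)) ha.1, swap_apply_fst (v := (T.y, T.x)) hb.1]
  cyc := R.cyc_addEdge hT ha hb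

lemma faceMap_addEdge (hT : T.NoXY) (ha : IsInsertionPoint T.G T.x T.y a)
    (hb : IsInsertionPoint T.G T.y T.x b) :
    faceMap (R.addEdge hT ha hb) =
      R.extFaceMap ∘ Equiv.swap a.swap (T.y, T.x) ∘ Equiv.swap b.swap (T.x, T.y) := by
  funext d
  simp only [faceMap, addEdge, extFaceMap, Function.comp_apply]
  congr 1
  rw [← Prod.swap_injective.swap_apply, ← Prod.swap_injective.swap_apply]
  rfl

lemma faceMap_addEdge_of_mem (hT : T.NoXY) (ha : IsInsertionPoint T.G T.x T.y a)
    (hb : IsInsertionPoint T.G T.y T.x b) {e : ℕ × ℕ} (he : e ∈ T.G.darts) (hea : e ≠ a.swap)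
    (heb : e ≠ b.swap) : faceMap (R.addEdge hT ha hb) e = faceMap R e := by
  rw [R.faceMap_addEdge hT ha hb, Function.comp_apply, Function.comp_apply,
    Equiv.swap_apply_of_ne_of_ne heb (by rintro rfl; exact hT.fst_notMem_darts he),
    Equiv.swap_apply_of_ne_of_ne hea (by rintro rfl; exact hT.snd_notMem_darts he),
    R.extFaceMap_of_mem he]

lemma faceMap_addEdge_fst (hT : T.NoXY) (ha : IsInsertionPoint T.G T.x T.y a)
    (hb : IsInsertionPoint T.G T.y T.x b) (hbD : b.swap ∈ T.G.darts) :
    faceMap (R.addEdge hT ha hb) (T.x, T.y) = faceMap R b.swap := by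
  have hba : b.swap ≠ a.swap := fun h =>
    T.hxy (ha.1.symm.trans ((congrArg Prod.snd h).symm.trans hb.1))
  rw [R.faceMap_addEdge hT ha hb, Function.comp_apply, Function.comp_apply,
    Equiv.swap_apply_right, Equiv.swap_apply_of_ne_of_ne hba
      (by intro h; rw [h] at hbD; exact hT.snd_notMem_darts hbD), R.extFaceMap_of_mem hbD]

lemma iterate_faceMap_addEdge_fst (hT : T.NoXY) (ha : IsInsertionPoint T.G T.x T.y a)
    (hb : IsInsertionPoint T.G T.y T.x b) (hbD : b.swap ∈ T.G.darts) {s : ℕ}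
    (h : ∀ t < s, (faceMap R)^[t] (faceMap R b.swap) ≠ a.swap ∧
      (faceMap R)^[t] (faceMap R b.swap) ≠ b.swap) :
    (faceMap (R.addEdge hT ha hb))^[s + 1] (T.x, T.y) = (faceMap R)^[s] (faceMap R b.swap) := by
  rw [Function.iterate_succ_apply, R.faceMap_addEdge_fst hT ha hb hbD]
  exact iterate_eq_of_forall_lt fun t ht => R.faceMap_addEdge_of_mem hT ha hb
    ((faceMap_bijOn R).mapsTo.iterate t ((faceMap_bijOn R).mapsTo hbD)) (h t ht).1 (h t ht).2

lemma bijOn_extFaceMap : Set.BijOn R.extFaceMap T.plus.G.darts T.plus.G.darts :=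
  (R.bijOn_extendId T.darts_subset_plus_darts).comp T.plus.G.bijOn_swap_darts

lemma forwardOrbit_extFaceMap {d : ℕ × ℕ} (hd : d ∈ T.G.darts) :
    forwardOrbit R.extFaceMap d = forwardOrbit (faceMap R) d :=
  forwardOrbit_congr fun _ he =>
    R.extFaceMap_of_mem (forwardOrbit_subset (faceMap_bijOn R).mapsTo hd he)

lemma forwardOrbit_extFaceMap_subset {d : ℕ × ℕ} (hd : d ∈ T.G.darts) :
    forwardOrbit R.extFaceMap d ⊆ T.G.darts :=
  R.forwardOrbit_extFaceMap hd ▸ forwardOrbit_subset (faceMap_bijOn R).mapsTo hd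

lemma ncard_forwardOrbits_extFaceMap (hT : T.NoXY) :
    (forwardOrbits R.extFaceMap T.plus.G.darts).ncard =
      (forwardOrbits (faceMap R) T.G.darts).ncard + 1 := by
  have h₁ : R.extFaceMap (T.x, T.y) = (T.y, T.x) := R.extendId_of_notMem hT.snd_notMem_darts
  have h₂ : R.extFaceMap (T.y, T.x) = (T.x, T.y) := R.extendId_of_notMem hT.fst_notMem_darts
  have horb : forwardOrbit R.extFaceMap (T.y, T.x) = forwardOrbit R.extFaceMap (T.x, T.y) :=
    forwardOrbit_eq_of_mem (Function.mk_mem_periodicPts two_pos (by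
      show R.extFaceMap (R.extFaceMap _) = _
      rw [h₁, h₂])) (h₁ ▸ apply_mem_forwardOrbit _ _)
  have hD : forwardOrbits R.extFaceMap T.G.darts = forwardOrbits (faceMap R) T.G.darts :=
    forwardOrbits_congr (faceMap_bijOn R).mapsTo fun _ hd => R.extFaceMap_of_mem hd
  have hnew : forwardOrbit R.extFaceMap (T.x, T.y) ∉ forwardOrbits (faceMap R) T.G.darts := by
    rintro ⟨d, hd, hO⟩
    exact hT.fst_notMem_darts (forwardOrbit_subset (faceMap_bijOn R).mapsTo hd
      (hO ▸ mem_forwardOrbit_self _ _))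
  rw [plus_darts, forwardOrbits_insert, forwardOrbits_insert, horb, Set.insert_idem, hD,
    Set.ncard_insert_of_notMem hnew (forwardOrbits_finite T.G.darts_finite
      (faceMap_bijOn R).mapsTo)]

lemma ncard_forwardOrbits_extFaceMap_comp_swap (hT : T.NoXY)
    (ha : IsInsertionPoint T.G T.x T.y a) :
    (forwardOrbits (R.extFaceMap ∘ Equiv.swap a.swap (T.y, T.x)) T.plus.G.darts).ncard =
      (forwardOrbits (faceMap R) T.G.darts).ncard + if T.G.IsIsolated T.x then 1 else 0 := by
  by_cases hiso : T.G.IsIsolated T.x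
  · rw [ha.eq_of_isIsolated hiso, Prod.swap_prod_mk, Equiv.swap_self, Equiv.coe_refl,
      Function.comp_id, R.ncard_forwardOrbits_extFaceMap hT, if_pos hiso]
  · have hpD : a.swap ∈ T.G.darts := swap_mem_darts.mpr (ha.mem_darts_iff.mpr hiso)
    have := ncard_forwardOrbits_comp_swap_of_notMem T.plus.G.darts_finite R.bijOn_extFaceMap
      (T.darts_subset_plus_darts hpD) T.snd_mem_plus_darts
      fun h => hT.snd_notMem_darts (R.forwardOrbit_extFaceMap_subset hpD h)
    rw [R.ncard_forwardOrbits_extFaceMap hT] at this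
    rw [if_neg hiso]
    omega

lemma forwardOrbit_extFaceMap_comp_swap_of_notMem (hT : T.NoXY) {p q : ℕ × ℕ}
    (hq : q ∈ T.G.darts) (hqp : q ∉ forwardOrbit (faceMap R) p) :
    forwardOrbit (R.extFaceMap ∘ Equiv.swap p (T.y, T.x)) q = forwardOrbit R.extFaceMap q := by
  refine forwardOrbit_congr fun e he => comp_swap_apply_of_ne ?_ ?_
  · rintro rfl
    rw [R.forwardOrbit_extFaceMap hq] at he
    exact hqp (mem_forwardOrbit_symm
      (mem_periodicPts_of_bijOn T.G.darts_finite (faceMap_bijOn R) hq) he)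
  · rintro rfl
    exact hT.snd_notMem_darts (R.forwardOrbit_extFaceMap_subset hq he)

lemma mem_forwardOrbit_extFaceMap_comp_swap_of_mem (hT : T.NoXY) {p q : ℕ × ℕ}
    (hpD : p ∈ T.G.darts) (hqp : q ∈ forwardOrbit (faceMap R) p) :
    (T.x, T.y) ∈ forwardOrbit (R.extFaceMap ∘ Equiv.swap p (T.y, T.x)) q := by
  have hmerge := forwardOrbit_comp_swap_of_notMem (u := p) (mem_periodicPts_of_bijOn
    T.plus.G.darts_finite R.bijOn_extFaceMap T.snd_mem_plus_darts)
    fun h => hT.snd_notMem_darts (R.forwardOrbit_extFaceMap_subset hpD h)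
  have hψ := R.bijOn_extFaceMap.comp
    (Equiv.bijOn_swap (T.darts_subset_plus_darts hpD) T.snd_mem_plus_darts)
  rw [forwardOrbit_eq_of_mem (mem_periodicPts_of_bijOn T.plus.G.darts_finite hψ
    (T.darts_subset_plus_darts hpD)) (hmerge ▸ Or.inl (R.forwardOrbit_extFaceMap hpD ▸ hqp)),
    hmerge]
  exact Or.inr ⟨1, R.extendId_of_notMem hT.fst_notMem_darts⟩

lemma mem_forwardOrbit_extFaceMap_comp_swap_iff (hT : T.NoXY)
    (ha : IsInsertionPoint T.G T.x T.y a) {q : ℕ × ℕ} (hq : q ∈ T.G.darts) :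
    (T.x, T.y) ∈ forwardOrbit (R.extFaceMap ∘ Equiv.swap a.swap (T.y, T.x)) q ↔
      R.SameFace a.swap q := by
  by_cases hpD : a.swap ∈ T.G.darts
  · refine ⟨fun h => ⟨hpD, by_contra fun hqp => ?_⟩,
      fun h => R.mem_forwardOrbit_extFaceMap_comp_swap_of_mem hT hpD h.2⟩
    rw [R.forwardOrbit_extFaceMap_comp_swap_of_notMem hT hq hqp] at h
    exact hT.fst_notMem_darts (R.forwardOrbit_extFaceMap_subset hq h)
  · rw [ha.eq_of_notMem (swap_mem_darts.not.mpr hpD), Prod.swap_prod_mk, Equiv.swap_self,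
      Equiv.coe_refl, Function.comp_id]
    exact iff_of_false (fun h => hT.fst_notMem_darts (R.forwardOrbit_extFaceMap_subset hq h))
      fun h => hT.snd_notMem_darts h.1

lemma ncard_forwardOrbits_faceMap_addEdge (hT : T.NoXY) (ha : IsInsertionPoint T.G T.x T.y a)
    (hb : IsInsertionPoint T.G T.y T.x b) :
    (R.SameFace a.swap b.swap →
      (forwardOrbits (faceMap (R.addEdge hT ha hb)) T.plus.G.darts).ncard =
        (forwardOrbits (faceMap R) T.G.darts).ncard + 1) ∧
    (¬ (R.SameFace a.swap b.swap) →
      (forwardOrbits (faceMap (R.addEdge hT ha hb)) T.plus.G.darts).ncard + 1 =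
        (forwardOrbits (faceMap R) T.G.darts).ncard + ((if T.G.IsIsolated T.x then 1 else 0) +
          if T.G.IsIsolated T.y then 1 else 0)) := by
  have hψ := R.ncard_forwardOrbits_extFaceMap_comp_swap hT ha
  rw [R.faceMap_addEdge hT ha hb, ← Function.comp_assoc]
  by_cases hqD : b.swap ∈ T.G.darts
  · have hy : ¬ T.G.IsIsolated T.y := hb.mem_darts_iff.mp (swap_mem_darts.mp hqD)
    have hψbij := R.bijOn_extFaceMap.comp (Equiv.bijOn_swap
      (swap_mem_darts.mpr (ha.mem_plus_darts T.fst_mem_plus_darts)) T.snd_mem_plus_darts)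
    have hq : b.swap ∈ T.plus.G.darts := T.darts_subset_plus_darts hqD
    have hiff := R.mem_forwardOrbit_extFaceMap_comp_swap_iff hT ha hqD
    rw [if_neg hy]
    by_cases hsplit : R.SameFace a.swap b.swap
    · have hx : ¬ T.G.IsIsolated T.x := ha.mem_darts_iff.mp (swap_mem_darts.mp hsplit.1)
      have := ncard_forwardOrbits_comp_swap_of_mem T.plus.G.darts_finite hψbij hq
        T.fst_mem_plus_darts (fun h => hT.fst_notMem_darts (h ▸ hqD)) (hiff.mpr hsplit)
      rw [hψ, if_neg hx] at this
      exact ⟨fun _ => this, fun h => absurd hsplit h⟩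
    · have := ncard_forwardOrbits_comp_swap_of_notMem T.plus.G.darts_finite hψbij hq
        T.fst_mem_plus_darts (hiff.not.mpr hsplit)
      rw [hψ] at this
      exact ⟨fun h => absurd h hsplit, fun _ => by omega⟩
  · have hy : T.G.IsIsolated T.y := not_not.mp (hb.mem_darts_iff.not.mp
      (swap_mem_darts.not.mp hqD))
    have hq : b.swap = (T.x, T.y) := by rw [hb.eq_of_isIsolated hy]; rfl
    rw [if_pos hy, hq, Equiv.swap_self, Equiv.coe_refl, Function.comp_id, hψ]
    exact ⟨fun h => absurd (forwardOrbit_subset (faceMap_bijOn R).mapsTo h.1 h.2)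
      hT.fst_notMem_darts, fun _ => by omega⟩

lemma faceCount_addEdge (hT : T.NoXY) (ha : IsInsertionPoint T.G T.x T.y a)
    (hb : IsInsertionPoint T.G T.y T.x b) :
    (R.SameFace a.swap b.swap →
      faceCount (R.addEdge hT ha hb) = faceCount R + 1) ∧
    (¬ (R.SameFace a.swap b.swap) →
      faceCount (R.addEdge hT ha hb) + 1 = faceCount R) := by
  obtain ⟨hsplit, hmerge⟩ := R.ncard_forwardOrbits_faceMap_addEdge hT ha hb
  have hisol := isolCount_plus_add (T := T)
  rw [faceCount_eq, faceCount_eq]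
  refine ⟨fun h => ?_, fun h => ?_⟩
  · have hx : ¬ T.G.IsIsolated T.x := ha.mem_darts_iff.mp (swap_mem_darts.mp h.1)
    have hy : ¬ T.G.IsIsolated T.y := hb.mem_darts_iff.mp (swap_mem_darts.mp
      (forwardOrbit_subset (faceMap_bijOn R).mapsTo h.1 h.2))
    rw [if_neg hx, if_neg hy] at hisol
    have := hsplit h
    omega
  · have := hmerge h
    omega

lemma eulerVal_addEdge (hT : T.NoXY) (ha : IsInsertionPoint T.G T.x T.y a)
    (hb : IsInsertionPoint T.G T.y T.x b) :
    (R.SameFace a.swap b.swap →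
      eulerVal T.plus.G (R.addEdge hT ha hb) = eulerVal T.G R) ∧
    (eulerVal T.plus.G (R.addEdge hT ha hb) = eulerVal T.G R ∨
      eulerVal T.plus.G (R.addEdge hT ha hb) = eulerVal T.G R + 2) := by
  obtain ⟨hsplit, hmerge⟩ := R.faceCount_addEdge hT ha hb
  have hedges : T.plus.G.edges.card = T.G.edges.card + 1 := Finset.card_insert_of_notMem hT
  have hverts : T.plus.G.verts = T.G.verts := rfl
  unfold eulerVal
  rw [hedges, hverts]
  by_cases h : R.SameFace a.swap b.swap
  · have hreach := reach_of_mem_forwardOrbit_faceMap R h.1 h.2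
    rw [Prod.snd_swap, Prod.snd_swap, ha.1, hb.1] at hreach
    have := hsplit h
    have := compCount_plus_of_reach hreach
    push_cast
    refine ⟨fun _ => by omega, Or.inl (by omega)⟩
  · have hf := hmerge h
    refine ⟨fun h' => absurd h' h, ?_⟩
    by_cases hreach : T.G.Reach T.x T.y
    · have := compCount_plus_of_reach hreach
      push_cast
      omega
    · have := compCount_plus_of_not_reach hreach
      push_cast
      omega

end Rot

lemma IsAlt.exists_plus {T : TGraph} (hT : T.NoXY) {R : Rot T.G} (halt : IsAlt T R) :
    ∃ R' : Rot T.plus.G, eulerVal T.plus.G R' = eulerVal T.G R ∧ IsAlt T.plus R' := by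
  obtain ⟨d, hd, hdx, i, j, k, hi, hij, hjk, hkT, hiy, hjx, hky⟩ := halt
  set P := Function.minimalPeriod (faceMap R) d
  have hper := mem_periodicPts_of_bijOn T.G.darts_finite (faceMap_bijOn R) hd
  have hmem : ∀ n, (faceMap R)^[n] d ∈ T.G.darts := fun n =>
    (faceMap_bijOn R).mapsTo.iterate n hd
  have hinj : ∀ m n, m < P → n < P → (faceMap R)^[m] d = (faceMap R)^[n] d → m = n :=
    fun m n hm hn h => Function.iterate_injOn_Iio_minimalPeriod hm hn h
  have hφq := apply_iterate_pred (f := faceMap R) (a := d) hi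
  have ha := IsInsertionPoint.swap_of_faceMap (w := T.y) R (hmem (P - 1))
    ((apply_iterate_minimalPeriod_pred hper).symm ▸ hdx)
  have hb := IsInsertionPoint.swap_of_faceMap (w := T.x) R (hmem (i - 1)) (hφq ▸ hiy)
  refine ⟨R.addEdge hT ha hb, (R.eulerVal_addEdge hT ha hb).1 ⟨by simpa using hmem _, ?_⟩, ?_⟩
  · rw [Prod.swap_swap, Prod.swap_swap,
      forwardOrbit_eq_of_mem hper (iterate_mem_forwardOrbit _ _ _)]
    exact iterate_mem_forwardOrbit _ _ _
  have hseg : ∀ s, s ≤ P - 1 - i →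
      (faceMap (R.addEdge hT ha hb))^[s + 1] (T.x, T.y) = (faceMap R)^[i + s] d := by
    intro s hs
    have key := R.iterate_faceMap_addEdge_fst hT ha hb (by simpa using hmem _) (s := s)
      fun t ht => by
        simp only [Prod.swap_swap, hφq, ← Function.iterate_add_apply]
        exact ⟨fun h => absurd (hinj _ _ (by omega) (by omega) h) (by omega),
          fun h => absurd (hinj _ _ (by omega) (by omega) h) (by omega)⟩
    rwa [Prod.swap_swap, hφq, ← Function.iterate_add_apply, add_comm s i] at key
  refine ⟨(T.x, T.y), T.fst_mem_plus_darts, rfl, 1, j - i + 1, k - i + 1, one_pos,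
    by omega, by omega, ?_, ?_, ?_, ?_⟩
  · refine lt_minimalPeriod_of_forall_iterate_ne (mem_periodicPts_of_bijOn T.plus.G.darts_finite
      (faceMap_bijOn _) T.fst_mem_plus_darts) fun s hs hsk h => hT.fst_notMem_darts ?_
    rw [← Nat.sub_add_cancel hs, hseg (s - 1) (by omega)] at h
    exact h ▸ hmem _
  · exact (congrArg Prod.fst (hseg 0 (by omega))).trans hiy
  · rw [hseg (j - i) (by omega), show i + (j - i) = j by omega]
    exact hjx
  · rw [hseg (k - i) (by omega), show i + (k - i) = k by omega]
    exact hky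

/-! ### Minimum-genus embeddings -/

namespace SGraph

variable {G : SGraph}

def rotOfEdgesEmpty (G : SGraph) (h : G.edges = ∅) : Rot G where
  r := id
  bij := Set.bijOn_id _
  fix _ _ := rfl
  cyc d hd := by simp [darts, h] at hd

lemma eulerVal_of_edges_eq_empty (h : G.edges = ∅) (R : Rot G) : eulerVal G R = 0 := by
  have hreach : ∀ v u, G.Reach v u ↔ u = v := fun v u =>
    Relation.reflTransGen_iff_eq fun w hw => by simp [Adj, h] at hw
  have hcomp : G.compCount = G.verts.card := by
    have : G.reachSets = (fun v => {v}) '' G.verts := by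
      ext S
      constructor <;> rintro ⟨v, hv, rfl⟩ <;>
        exact ⟨v, hv, Set.ext fun u => by simp [reachSet, hreach, eq_comm]⟩
    rw [compCount_eq, this, Set.ncard_image_of_injective _ Set.singleton_injective,
      Set.ncard_coe_finset]
  have hfaces : faceCount R = G.verts.card := by
    have hD : G.darts = ∅ := by ext; simp [darts, h]
    have hisol : G.isolCount = G.verts.card := by
      rw [isolCount, Finset.filter_true_of_mem fun v _ e he => by simp [h] at he]
    simp [faceCount_eq, hD, forwardOrbits, hisol]
  simp only [eulerVal, hcomp, hfaces, h, Finset.card_empty]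
  ring

end SGraph

lemma TGraph.NoXY.exists_eulerVal_plus_eq_two_mul {T : TGraph} (hT : T.NoXY)
    (h : ∃ (R : Rot T.G) (k : ℕ), 2 * (k : ℤ) = eulerVal T.G R) :
    ∃ (R : Rot T.plus.G) (k : ℕ), 2 * (k : ℤ) = eulerVal T.plus.G R := by
  obtain ⟨R, k, hk⟩ := h
  obtain ⟨a, ha⟩ := exists_isInsertionPoint T.G T.x T.y
  obtain ⟨b, hb⟩ := exists_isInsertionPoint T.G T.y T.x
  rcases (R.eulerVal_addEdge hT ha hb).2 with h | h
  · exact ⟨R.addEdge hT ha hb, k, h ▸ hk⟩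
  · exact ⟨R.addEdge hT ha hb, k + 1, by push_cast; omega⟩

lemma SGraph.exists_eulerVal_eq_two_mul (G : SGraph) :
    ∃ (R : Rot G) (k : ℕ), 2 * (k : ℤ) = eulerVal G R := by
  induction hn : G.edges.card generalizing G with
  | zero =>
    have h := Finset.card_eq_zero.mp hn
    exact ⟨G.rotOfEdgesEmpty h, 0, by rw [eulerVal_of_edges_eq_empty h]; rfl⟩
  | succ n ih =>
    obtain ⟨e, he⟩ := Finset.card_pos.mp (hn ▸ n.succ_pos : 0 < G.edges.card)
    induction e using Sym2.ind with
    | _ a b =>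
      have hab : a ≠ b := fun h => G.loopless _ he (h ▸ Sym2.mk_isDiag_iff.mpr rfl)
      let T : TGraph := ⟨G.del a b, a, b, G.edge_sub _ he a (Sym2.mem_mk_left a b),
        G.edge_sub _ he b (Sym2.mem_mk_right a b), hab⟩
      have hT : T.NoXY := Finset.notMem_erase _ _
      have hG : T.plus.G = G := ext_of rfl (Finset.insert_erase he)
      have hcard : T.G.edges.card = n := by
        rw [show T.G.edges = G.edges.erase s(a, b) from rfl, Finset.card_erase_of_mem he, hn]
        rfl
      exact hG ▸ hT.exists_eulerVal_plus_eq_two_mul (ih T.G hcard)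

lemma SGraph.genus_le_of_eulerVal {G : SGraph} {k : ℕ} (R : Rot G)
    (h : 2 * (k : ℤ) = eulerVal G R) : G.genus ≤ k :=
  Nat.sInf_le ⟨R, h⟩

lemma SGraph.exists_eulerVal_eq_two_mul_genus (G : SGraph) :
    ∃ R : Rot G, 2 * (G.genus : ℤ) = eulerVal G R :=
  Nat.sInf_mem (s := {k : ℕ | ∃ R : Rot G, 2 * (k : ℤ) = eulerVal G R}) <| by
    obtain ⟨R, k, hk⟩ := G.exists_eulerVal_eq_two_mul
    exact ⟨k, R, hk⟩

lemma TGraph.NoXY.genus_plus_le_genus_add_one {T : TGraph} (hT : T.NoXY) :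
    T.plus.G.genus ≤ T.G.genus + 1 := by
  obtain ⟨R, hR⟩ := T.G.exists_eulerVal_eq_two_mul_genus
  obtain ⟨a, ha⟩ := exists_isInsertionPoint T.G T.x T.y
  obtain ⟨b, hb⟩ := exists_isInsertionPoint T.G T.y T.x
  rcases (R.eulerVal_addEdge hT ha hb).2 with h | h
  · exact (T.plus.G.genus_le_of_eulerVal _ (h ▸ hR)).trans T.G.genus.le_succ
  · exact T.plus.G.genus_le_of_eulerVal (R.addEdge hT ha hb) (by push_cast; omega)

lemma IsXYAlt.exists_plus {T : TGraph} (hT : T.NoXY) (h : IsXYAlt T) :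
    ∃ R' : Rot T.plus.G, 2 * (T.G.genus : ℤ) = eulerVal T.plus.G R' ∧ IsAlt T.plus R' := by
  obtain ⟨R, hR, halt⟩ := h
  obtain ⟨R', hR', halt'⟩ := halt.exists_plus hT
  exact ⟨R', hR.trans hR'.symm, halt'⟩

lemma IsXYAlt.genus_plus_le {T : TGraph} (hT : T.NoXY) (h : IsXYAlt T) :
    T.plus.G.genus ≤ T.G.genus := by
  obtain ⟨R', hR', -⟩ := h.exists_plus hT
  exact T.plus.G.genus_le_of_eulerVal R' hR'

lemma IsXYAlt.genus_plus_lt {T : TGraph} (hT : T.NoXY) (h : IsXYAlt T)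
    (h' : ¬ IsXYAlt T.plus) : T.plus.G.genus < T.G.genus := by
  obtain ⟨R', hR', halt⟩ := h.exists_plus hT
  exact (h.genus_plus_le hT).lt_of_ne fun heq => h' ⟨R', heq ▸ hR', halt⟩

/-- Lemma (lm-alt-edge). -/
theorem gaP_lt_gapP_iff (G : TGraph) (h : G.NoXY) :
    gaP G < gapP G ↔ epspP G = 0 ∧ thetaP G = 1 := by
  have hle := h.genus_plus_le_genus_add_one
  unfold gaP gapP thetaP epspP epsP gP gpP
  by_cases hε : IsXYAlt G
  · by_cases hε' : IsXYAlt G.plus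
    · have := hε.genus_plus_le h
      simp only [hε, hε', if_true]
      omega
    · have := hε.genus_plus_lt h hε'
      simp only [hε, hε', if_true, if_false]
      omega
  · split_ifs <;> omega
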